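/- Let X be a complete median space in which every interval [a,b] is compact. Then for any two nonempty compact convex subsets C₁, C₂ of X, the convex hull Conv(C₁ ∪ C₂) is compact. In particular, the convex hull of any nonempty finite subset of X is compact. -/

import Mathlib

/-- The interval `[a,b]` in a metric space: points `x` with `d(a,x) + d(x,b) = d(a,b)`. -/
def mInterval {X : Type*} [MetricSpace X] (a b : X) : Set X :=
  {x : X | dist a x + dist x b = dist a b}

/-- A median space: every triple of points has a unique median point. -/
def IsMedianSpace (X : Type*) [MetricSpace X] : Prop :=
  ∀ a b c : X, ∃! m : X,
    m ∈ mInterval a b ∩ mInterval b c ∩ mInterval a c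

/-- A subset is (median) convex if it contains the interval between any two of its points. -/
def MConvex {X : Type*} [MetricSpace X] (C : Set X) : Prop :=
  ∀ a ∈ C, ∀ b ∈ C, mInterval a b ⊆ C

/-- A halfspace: a convex subset with convex complement. -/
def IsHalfspace {X : Type*} [MetricSpace X] (h : Set X) : Prop :=
  MConvex h ∧ MConvex hᶜ

/-- Two subsets are transverse if the four pairwise intersections of them and
their complements are all nonempty. -/
def TransverseSets {X : Type*} (h₁ h₂ : Set X) : Prop :=
  (h₁ ∩ h₂).Nonempty ∧ (h₁ᶜ ∩ h₂).Nonempty ∧ (h₁ ∩ h₂ᶜ).Nonempty ∧ (h₁ᶜ ∩ h₂ᶜ).Nonempty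

/-- `X` has rank `n`: there are `n` pairwise transverse halfspaces but not `n+1`. -/
def HasMedianRank (X : Type*) [MetricSpace X] (n : ℕ) : Prop :=
  (∃ h : Fin n → Set X, (∀ i, IsHalfspace (h i)) ∧
    ∀ i j, i ≠ j → TransverseSets (h i) (h j)) ∧
  ¬ ∃ h : Fin (n + 1) → Set X, (∀ i, IsHalfspace (h i)) ∧
    ∀ i j, i ≠ j → TransverseSets (h i) (h j)

/-- Median convex hull: intersection of all convex subsets containing `A`. -/
def mConvexHull {X : Type*} [MetricSpace X] (A : Set X) : Set X :=
  ⋂₀ {C : Set X | MConvex C ∧ A ⊆ C}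

/-- The hyperplane bounding a halfspace `h`. -/
def mHyperplane {X : Type*} [MetricSpace X] (h : Set X) : Set X :=
  closure h ∩ closure hᶜ

/-- Depth of the halfspace `h` in the subset `A`:
`sup { d(x, ĥ) | x ∈ h ∩ A }`. -/
noncomputable def mDepth {X : Type*} [MetricSpace X] (A h : Set X) : ℝ :=
  sSup ((fun x => Metric.infDist x (mHyperplane h)) '' (h ∩ A))

/-- `π` is the nearest-point projection onto `C`. -/
def IsNearestPointProj {X : Type*} [MetricSpace X] (C : Set X) (π : X → X) : Prop :=
  ∀ x : X, π x ∈ C ∧ dist x (π x) = Metric.infDist x C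

/-- The halfspace `h` separates the points `x` and `y`. -/
def SeparatesPts {X : Type*} (h : Set X) (x y : X) : Prop :=
  (x ∈ h ∧ y ∈ hᶜ) ∨ (y ∈ h ∧ x ∈ hᶜ)



/-!
The convex hull of `C₁ ∪ C₂` is the join `⋃_{a ∈ C₁, b ∈ C₂} [a, b]`. The join is convex because
of the median calculus: a point `z ∈ [x, y]` with `x ∈ [a, b]`, `y ∈ [a', b']` lies in
`[m(a, a', z), m(b, b', z)]`. It is compact because if `z ∈ [f, g]` then the median of `p, z, q`
is a point of `[p, q]` within `d(f, p) + d(g, q)` of `z`; so a sequence in the join has a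
subsequence shadowing a sequence in a compact interval `[p, q]`. The finite case follows by
induction, adding one point at a time.
-/

section

variable {X : Type*} [MetricSpace X]

section Interval

lemma mem_mInterval {a b x : X} : x ∈ mInterval a b ↔ dist a x + dist x b = dist a b := Iff.rfl

lemma left_mem_mInterval (a b : X) : a ∈ mInterval a b := by
  simp [mem_mInterval]

lemma right_mem_mInterval (a b : X) : b ∈ mInterval a b := by
  simp [mem_mInterval]

lemma mInterval_comm (a b : X) : mInterval a b = mInterval b a := by
  ext x
  rw [mem_mInterval, mem_mInterval, dist_comm a x, dist_comm x b, dist_comm a b,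
    add_comm (dist x a)]

lemma mInterval_subset_of_mem {a b x : X} (hx : x ∈ mInterval a b) :
    mInterval a x ⊆ mInterval a b := by
  intro y hy
  rw [mem_mInterval] at *
  linarith [dist_triangle a y b, dist_triangle y x b]

lemma mInterval_self (a : X) : mInterval a a = {a} := by
  ext x
  rw [mem_mInterval, dist_self, dist_comm x a, ← two_mul, Set.mem_singleton_iff]
  simp [eq_comm]

lemma mConvex_singleton (a : X) : MConvex ({a} : Set X) := by
  rintro x rfl y rfl
  rw [mInterval_self]

end Interval

namespace IsMedianSpace

variable (hm : IsMedianSpace X)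

noncomputable def med (a b c : X) : X := (hm a b c).choose

lemma med_mem (a b c : X) :
    hm.med a b c ∈ mInterval a b ∩ mInterval b c ∩ mInterval a c :=
  (hm a b c).choose_spec.1

lemma eq_med {a b c m : X} (h : m ∈ mInterval a b ∩ mInterval b c ∩ mInterval a c) :
    m = hm.med a b c :=
  (hm a b c).choose_spec.2 m h

lemma med_mem_mInterval_of_mem (a : X) {b c x : X} (hx : x ∈ mInterval b c) :
    hm.med a b c ∈ mInterval a x := by
  obtain ⟨⟨hab, hbx⟩, hax⟩ := hm.med_mem a b x
  obtain ⟨-, hac⟩ := hm.med_mem a x c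
  obtain ⟨⟨pah, phh'⟩, pah'⟩ := hm.med_mem a (hm.med a b x) (hm.med a x c)
  set h := hm.med a b x
  set h' := hm.med a x c
  set p := hm.med a h h'
  have p_ab : p ∈ mInterval a b := mInterval_subset_of_mem hab pah
  have p_ac : p ∈ mInterval a c := mInterval_subset_of_mem hac pah'
  have p_ax : p ∈ mInterval a x := mInterval_subset_of_mem hax pah
  have p_bc : p ∈ mInterval b c := by
    obtain ⟨-, h'xc⟩ := (hm.med_mem a x c).1
    simp only [mem_mInterval] at *
    linarith [dist_triangle h x h', dist_triangle b h p, dist_triangle p h' c,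
      dist_triangle b p c, dist_comm h b, dist_comm p h, dist_comm h x, dist_comm x h']
  rwa [← hm.eq_med ⟨⟨p_ab, p_bc⟩, p_ac⟩]

lemma mem_mInterval_med {z a b n : X} (hna : n ∈ mInterval z a) (hnb : n ∈ mInterval z b) :
    n ∈ mInterval z (hm.med z a b) := by
  obtain ⟨⟨gza, gab⟩, gzb⟩ := hm.med_mem z a b
  obtain ⟨⟨una, uab⟩, unb⟩ := hm.med_mem n a b
  set g := hm.med z a b
  set u := hm.med n a b
  have hgu : g ∈ mInterval z u := hm.med_mem_mInterval_of_mem z uab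
  -- Going from `a` to `b` through `g` and through `u` forces `g = u`, and `n ∈ [z, u]`.
  simp only [mem_mInterval] at *
  linarith [dist_triangle z n u, dist_triangle n u g, dist_triangle z n g,
    dist_nonneg (x := g) (y := u), dist_comm u g, dist_comm a u, dist_comm a g]

lemma mem_mInterval_med_med {a b a' b' x y z : X} (hx : x ∈ mInterval a b)
    (hy : y ∈ mInterval a' b') (hz : z ∈ mInterval x y) :
    z ∈ mInterval (hm.med a a' z) (hm.med b b' z) := by
  obtain ⟨⟨-, αa'z⟩, αaz⟩ := hm.med_mem a a' z
  obtain ⟨⟨-, βb'z⟩, βbz⟩ := hm.med_mem b b' z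
  obtain ⟨⟨nαz, nzβ⟩, nαβ⟩ := hm.med_mem (hm.med a a' z) z (hm.med b b' z)
  set α := hm.med a a' z
  set β := hm.med b b' z
  set n := hm.med α z β
  rw [mInterval_comm] at nαz αaz αa'z βbz βb'z
  have nza : n ∈ mInterval z a := mInterval_subset_of_mem αaz nαz
  have nza' : n ∈ mInterval z a' := mInterval_subset_of_mem αa'z nαz
  have nzb : n ∈ mInterval z b := mInterval_subset_of_mem βbz nzβ
  have nzb' : n ∈ mInterval z b' := mInterval_subset_of_mem βb'z nzβ
  have nzx : n ∈ mInterval z x :=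
    mInterval_subset_of_mem (hm.med_mem_mInterval_of_mem z hx) (hm.mem_mInterval_med nza nzb)
  have nzy : n ∈ mInterval z y :=
    mInterval_subset_of_mem (hm.med_mem_mInterval_of_mem z hy) (hm.mem_mInterval_med nza' nzb')
  -- `n ∈ [z, x] ∩ [z, y]` and `z ∈ [x, y]` force `n = z`.
  simp only [mem_mInterval] at nzx nzy hz nαz nzβ nαβ ⊢
  linarith [dist_triangle x n y, dist_comm x n, dist_comm n y, dist_comm x z, dist_comm α z,
    dist_comm α n, dist_nonneg (x := z) (y := n)]

lemma dist_med_le {f g z : X} (hz : z ∈ mInterval f g) (p q : X) :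
    dist z (hm.med p z q) ≤ dist f p + dist g q := by
  obtain ⟨⟨wpz, wzq⟩, wpq⟩ := hm.med_mem p z q
  simp only [mem_mInterval] at *
  linarith [dist_triangle z f p, dist_triangle z g q, dist_triangle4 f p q g,
    dist_comm p (hm.med p z q), dist_comm z f, dist_comm q g, dist_comm z q, dist_comm p z,
    dist_comm (hm.med p z q) z]

end IsMedianSpace

section Hull

lemma mConvex_mConvexHull (A : Set X) : MConvex (mConvexHull A) :=
  fun _ hx _ hy _ hz C hC => hC.1 _ (hx C hC) _ (hy C hC) hz

lemma subset_mConvexHull (A : Set X) : A ⊆ mConvexHull A :=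
  fun _ hx => Set.mem_sInter.mpr fun _ hC => hC.2 hx

lemma mConvexHull_subset {A C : Set X} (hC : MConvex C) (hAC : A ⊆ C) : mConvexHull A ⊆ C :=
  Set.sInter_subset_of_mem ⟨hC, hAC⟩

lemma mConvexHull_mono {A B : Set X} (h : A ⊆ B) : mConvexHull A ⊆ mConvexHull B :=
  mConvexHull_subset (mConvex_mConvexHull B) (h.trans (subset_mConvexHull B))

lemma mConvexHull_union_mConvexHull (A B : Set X) :
    mConvexHull (A ∪ mConvexHull B) = mConvexHull (A ∪ B) :=
  subset_antisymm
    (mConvexHull_subset (mConvex_mConvexHull _) <| Set.union_subset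
      (Set.subset_union_left.trans (subset_mConvexHull _))
      (mConvexHull_mono Set.subset_union_right))
    (mConvexHull_mono (Set.union_subset_union_right A (subset_mConvexHull B)))

def mJoin (C₁ C₂ : Set X) : Set X :=
  {z | ∃ a ∈ C₁, ∃ b ∈ C₂, z ∈ mInterval a b}

variable {C₁ C₂ : Set X}

lemma subset_mJoin_left (h₂ : C₂.Nonempty) : C₁ ⊆ mJoin C₁ C₂ := fun a ha =>
  ⟨a, ha, h₂.some, h₂.some_mem, left_mem_mInterval _ _⟩

lemma subset_mJoin_right (h₁ : C₁.Nonempty) : C₂ ⊆ mJoin C₁ C₂ := fun b hb =>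
  ⟨h₁.some, h₁.some_mem, b, hb, right_mem_mInterval _ _⟩

lemma mJoin_subset {C : Set X} (hC : MConvex C) (h₁ : C₁ ⊆ C) (h₂ : C₂ ⊆ C) :
    mJoin C₁ C₂ ⊆ C := by
  rintro z ⟨a, ha, b, hb, hz⟩
  exact hC a (h₁ ha) b (h₂ hb) hz

lemma IsMedianSpace.mConvex_mJoin (hm : IsMedianSpace X) (h₁ : MConvex C₁) (h₂ : MConvex C₂) :
    MConvex (mJoin C₁ C₂) := by
  rintro x ⟨a, ha, b, hb, hx⟩ y ⟨a', ha', b', hb', hy⟩ z hz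
  exact ⟨hm.med a a' z, h₁ a ha a' ha' (hm.med_mem a a' z).1.1,
    hm.med b b' z, h₂ b hb b' hb' (hm.med_mem b b' z).1.1, hm.mem_mInterval_med_med hx hy hz⟩

lemma IsMedianSpace.mConvexHull_union (hm : IsMedianSpace X) (hn₁ : C₁.Nonempty)
    (hn₂ : C₂.Nonempty) (h₁ : MConvex C₁) (h₂ : MConvex C₂) :
    mConvexHull (C₁ ∪ C₂) = mJoin C₁ C₂ :=
  subset_antisymm
    (mConvexHull_subset (hm.mConvex_mJoin h₁ h₂)
      (Set.union_subset (subset_mJoin_left hn₂) (subset_mJoin_right hn₁)))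
    (mJoin_subset (mConvex_mConvexHull _)
      (Set.subset_union_left.trans (subset_mConvexHull _))
      (Set.subset_union_right.trans (subset_mConvexHull _)))

lemma IsMedianSpace.isCompact_mJoin (hm : IsMedianSpace X)
    (hcpt : ∀ a b : X, IsCompact (mInterval a b)) (h₁ : IsCompact C₁) (h₂ : IsCompact C₂) :
    IsCompact (mJoin C₁ C₂) := by
  refine IsSeqCompact.isCompact fun z hz => ?_
  choose f hf g hg hzfg using hz
  obtain ⟨⟨p, q⟩, ⟨hp, hq⟩, φ, hφ, hfg⟩ :=
    (h₁.prod h₂).tendsto_subseq (x := fun n => (f n, g n)) fun n => ⟨hf n, hg n⟩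
  obtain ⟨l, hl, ψ, hψ, hw⟩ :=
    (hcpt p q).tendsto_subseq fun n => (hm.med_mem p (z (φ n)) q).2
  refine ⟨l, ⟨p, hp, q, hq, hl⟩, φ ∘ ψ, hφ.comp hψ, hw.congr_dist ?_⟩
  have hfp := tendsto_iff_dist_tendsto_zero.1 hfg.fst_nhds
  have hgq := tendsto_iff_dist_tendsto_zero.1 hfg.snd_nhds
  refine squeeze_zero (fun _ => dist_nonneg) (fun n => ?_)
    (by simpa using (hfp.add hgq).comp hψ.tendsto_atTop)
  rw [dist_comm]
  exact hm.dist_med_le (hzfg _) p q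

end Hull

lemma IsMedianSpace.isCompact_mConvexHull_union (hm : IsMedianSpace X)
    (hcpt : ∀ a b : X, IsCompact (mInterval a b)) {C₁ C₂ : Set X} (hn₁ : C₁.Nonempty)
    (hn₂ : C₂.Nonempty) (hc₁ : IsCompact C₁) (hc₂ : IsCompact C₂) (h₁ : MConvex C₁)
    (h₂ : MConvex C₂) : IsCompact (mConvexHull (C₁ ∪ C₂)) := by
  rw [hm.mConvexHull_union hn₁ hn₂ h₁ h₂]
  exact hm.isCompact_mJoin hcpt hc₁ hc₂

lemma IsMedianSpace.isCompact_mConvexHull_of_finite (hm : IsMedianSpace X)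
    (hcpt : ∀ a b : X, IsCompact (mInterval a b)) {F : Set X} (hF : F.Finite)
    (hne : F.Nonempty) : IsCompact (mConvexHull F) := by
  induction F, hF using Set.Finite.induction_on with
  | empty => exact absurd hne Set.not_nonempty_empty
  | @insert a s _ _ ih =>
    have ha := Set.singleton_nonempty a
    rcases s.eq_empty_or_nonempty with rfl | hs
    · simpa using hm.isCompact_mConvexHull_union hcpt ha ha isCompact_singleton
        isCompact_singleton (mConvex_singleton a) (mConvex_singleton a)
    · rw [Set.insert_eq, ← mConvexHull_union_mConvexHull]
      exact hm.isCompact_mConvexHull_union hcpt ha (hs.mono (subset_mConvexHull s))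
        isCompact_singleton (ih hs) (mConvex_singleton a) (mConvex_mConvexHull s)

end

theorem statement11_general (X : Type*) [MetricSpace X]
    (hmed : IsMedianSpace X) (hcpt : ∀ a b : X, IsCompact (mInterval a b)) :
    (∀ C₁ C₂ : Set X, C₁.Nonempty → C₂.Nonempty → IsCompact C₁ → IsCompact C₂ →
      MConvex C₁ → MConvex C₂ → IsCompact (mConvexHull (C₁ ∪ C₂))) ∧
    (∀ F : Set X, F.Finite → F.Nonempty → IsCompact (mConvexHull F)) :=
  ⟨fun _ _ => hmed.isCompact_mConvexHull_union hcpt,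
    fun _ => hmed.isCompact_mConvexHull_of_finite hcpt⟩

/-- In a complete median space with compact intervals, the convex hull of the union of two
nonempty compact convex subsets is compact; in particular the convex hull of any nonempty
finite subset is compact. -/
theorem statement11 (X : Type*) [MetricSpace X] [CompleteSpace X]
    (hmed : IsMedianSpace X) (hcpt : ∀ a b : X, IsCompact (mInterval a b)) :
    (∀ C₁ C₂ : Set X, C₁.Nonempty → C₂.Nonempty → IsCompact C₁ → IsCompact C₂ →
      MConvex C₁ → MConvex C₂ → IsCompact (mConvexHull (C₁ ∪ C₂))) ∧
    (∀ F : Set X, F.Finite → F.Nonempty → IsCompact (mConvexHull F)) :=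
  statement11_general X hmed hcpt
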